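/- arXiv:2301.00711 — 4 statements merged into one kernel-verified Lean document; each statement's English description precedes it below -/
import Mathlib

section
/- For t ∈ ℚ \ {0}, let E_t be the elliptic curve y² = x³ − 3(t²+1)x² + 3x − 1, with discriminant Δ(E_t) = −432·t⁴·(9 + 4t²) ≠ 0. Then for every prime p ∉ {2, 3} with ν_p(t(9 + 4t²)) = 0, p is a prime of good reduction of E_t and |Ẽ_{t,p}(𝔽_p)| ≡ 0 (mod 3). -/
/-!
STATEMENT 3: For `t ∈ ℚ \ {0}`, let `E_t : y² = x³ − 3(t²+1)x² + 3x − 1`, with discriminant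
`Δ(E_t) = −432·t⁴·(9 + 4t²) ≠ 0`.  Then for every prime `p ∉ {2, 3}` with
`ν_p(t(9 + 4t²)) = 0`, `p` is a prime of good reduction of `E_t` and
`|Ẽ_{t,p}(𝔽_p)| ≡ 0 (mod 3)`.

Under the valuation hypothesis the coefficients of `E_t` are `p`-integral, so the reduction
`Ẽ_{t,p}` of `E_t` mod `p` is the Weierstrass curve over `𝔽_p = ZMod p` whose coefficients are
the images (under `Rat.cast`) of those of `E_t`; good reduction at `p` means this reduction is
nonsingular, i.e. has nonzero discriminant.  `|Ẽ_{t,p}(𝔽_p)|` counts the point at infinity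
together with the affine solutions of the Weierstrass equation.
-/

open WeierstrassCurve

/-- The number of points of a Weierstrass curve over a ring: the point at infinity together
with the affine points satisfying the Weierstrass equation. -/
noncomputable def ptCount {R : Type*} [CommRing R] (W : WeierstrassCurve R) : ℕ :=
  1 + Nat.card {P : R × R // W.toAffine.Equation P.1 P.2}

/-- The elliptic curve `E_t : y² = x³ − 3(t²+1)x² + 3x − 1` over `ℚ`. -/
def Et (t : ℚ) : WeierstrassCurve ℚ :=
  ⟨0, -(3 * (t ^ 2 + 1)), 0, 3, -1⟩

/-- The naive reduction mod `p` of a Weierstrass curve over `ℚ` (coefficientwise cast of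
rationals to `ZMod p`); this is the reduction of the curve when its coefficients are
`p`-integral. -/
noncomputable def ratRed (E : WeierstrassCurve ℚ) (p : ℕ) [Fact p.Prime] :
    WeierstrassCurve (ZMod p) :=
  ⟨(E.a₁ : ZMod p), (E.a₂ : ZMod p), (E.a₃ : ZMod p), (E.a₄ : ZMod p), (E.a₆ : ZMod p)⟩

/-- The discriminant of the curve `y² = x³ − 3(τ²+1)x² + 3x − 1` over any ring. -/
private lemma Δ_val {F : Type*} [CommRing F] (τ : F) :
    (⟨0, -(3*(τ^2+1)), 0, 3, -1⟩ : WeierstrassCurve F).Δ = -432*τ^4*(9+4*τ^2) := by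
  simp only [Δ, b₂, b₄, b₆, b₈]
  ring

/-- The type of nonsingular points of a curve with nonzero discriminant is the option type
on the affine solutions of the Weierstrass equation. -/
private def pointEquiv {F : Type*} [Field F] (W : WeierstrassCurve F) (hΔ : W.Δ ≠ 0) :
    W.toAffine.Point ≃ Option {P : F × F // W.toAffine.Equation P.1 P.2} where
  toFun P := match P with
    | .zero => none
    | @Affine.Point.some _ _ _ x y h => some ⟨(x, y), h.1⟩
  invFun o := match o with
    | none => .zero
    | some P => .some _ _ ((W.toAffine.equation_iff_nonsingular_of_Δ_ne_zero hΔ).mp P.2)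
  left_inv P := by cases P <;> rfl
  right_inv o := by rcases o with _ | ⟨⟨x, y⟩, h⟩ <;> rfl

private lemma some_congr {F : Type*} [Field F] {W : Affine F} {x₁ y₁ x₂ y₂ : F}
    (h₁ : W.Nonsingular x₁ y₁) (h₂ : W.Nonsingular x₂ y₂) (hx : x₁ = x₂) (hy : y₁ = y₂) :
    Affine.Point.some _ _ h₁ = Affine.Point.some _ _ h₂ := by subst hx; subst hy; rfl

/-- Cardano-type solution of the cubic `(x-1)³ = 4τ²(x²+x+1)` from a cube root `v`. -/
private lemma cardano {F : Type*} [Field F] (τ v : F) (h3 : (3:F) ≠ 0) (hv0 : v ≠ 0)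
    (hv : v^3 = 4*τ^2*(4*τ^2+9)^2) :
    ((v^2 + (3+4*τ^2)*v + 4*τ^2*(9+4*τ^2)) / (3*v) - 1)^3
      = 4*τ^2*(((v^2 + (3+4*τ^2)*v + 4*τ^2*(9+4*τ^2)) / (3*v))^2
          + (v^2 + (3+4*τ^2)*v + 4*τ^2*(9+4*τ^2)) / (3*v) + 1) := by
  have h3v : (3*v : F) ≠ 0 := mul_ne_zero h3 hv0
  field_simp
  linear_combination (v^3 - 144*τ^4 - 64*τ^6) * hv

/-- From a root of the cubic factor of the 3-division polynomial, produce a 3-torsion-type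
affine point. -/
private lemma point_of_root {F : Type*} [Field F] (h3 : (3:F) ≠ 0) {τ X : F} (hτ : τ ≠ 0)
    (h9 : 9 + 4*τ^2 ≠ 0) (hq : (X-1)^3 = 4*τ^2*(X^2+X+1)) :
    ∃ x y : F, y^2 = x^3 - 3*(τ^2+1)*x^2 + 3*x - 1 ∧ y ≠ 0 ∧
      (x-1)*((x-1)^3 - 4*τ^2*(x^2+x+1)) = 0 := by
  refine ⟨X, τ * (X+2), by linear_combination -hq, ?_, by linear_combination (X-1)*hq⟩
  refine mul_ne_zero hτ fun h => (mul_ne_zero h3 h9) ?_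
  linear_combination -hq + (X^2 - 5*X + 13 - 4*τ^2*(X-1)) * h

/-- The main point-counting lemma, over an arbitrary finite field of characteristic
different from `2` and `3`. -/
private lemma key_dvd {F : Type*} [Field F] [Finite F] (h2 : (2:F) ≠ 0) (h3 : (3:F) ≠ 0)
    {τ : F} (hτ : τ ≠ 0) (h9 : 9 + 4*τ^2 ≠ 0) :
    3 ∣ ptCount (⟨0, -(3*(τ^2+1)), 0, 3, -1⟩ : WeierstrassCurve F) := by
  classical
  set W : WeierstrassCurve F := ⟨0, -(3*(τ^2+1)), 0, 3, -1⟩ with hW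
  have h432 : (432 : F) ≠ 0 := by
    have h : (432 : F) = 2^4 * 3^3 := by norm_num
    rw [h]
    exact mul_ne_zero (pow_ne_zero _ h2) (pow_ne_zero _ h3)
  have hΔ : W.Δ ≠ 0 := by
    rw [hW, Δ_val]
    exact mul_ne_zero (mul_ne_zero (neg_ne_zero.mpr h432) (pow_ne_zero _ hτ)) h9
  -- find an affine point of order three
  obtain ⟨x, y, heqf, hy, hpsi⟩ :
      ∃ x y : F, y^2 = x^3 - 3*(τ^2+1)*x^2 + 3*x - 1 ∧ y ≠ 0 ∧
        (x-1)*((x-1)^3 - 4*τ^2*(x^2+x+1)) = 0 := by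
    by_cases hcube : ∃ z : F, z ≠ 1 ∧ z ^ 3 = 1
    · obtain ⟨z, hz1, hz3⟩ := hcube
      have hz : z^2 + z + 1 = 0 := by
        rcases mul_eq_zero.mp (show (z - 1) * (z^2 + z + 1) = 0 by linear_combination hz3) with
          h | h
        · exact absurd (by linear_combination h) hz1
        · exact h
      refine ⟨1, τ * (2*z+1), by linear_combination (4*τ^2) * hz, ?_, by ring⟩
      refine mul_ne_zero hτ fun h => h3 ?_
      linear_combination 4*hz - (2*z+1)*h
    · push_neg at hcube
      have hinj : Function.Injective fun z : F => z ^ 3 := by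
        intro u w huw
        simp only at huw
        by_cases hw : w = 0
        · subst hw
          simpa [pow_eq_zero_iff] using huw
        · by_contra hne
          refine hcube (u / w) (fun h => hne ?_) (by rw [div_pow, huw, div_self (pow_ne_zero 3 hw)])
          rwa [div_eq_one_iff_eq hw] at h
      have h9' : (4*τ^2 + 9 : F) ≠ 0 := fun h => h9 (by linear_combination h)
      have h4 : (4 : F) ≠ 0 := by
        have h : (4 : F) = 2^2 := by norm_num
        rw [h]; exact pow_ne_zero _ h2
      have hA : 4*τ^2*(4*τ^2+9)^2 ≠ 0 :=
        mul_ne_zero (mul_ne_zero h4 (pow_ne_zero _ hτ)) (pow_ne_zero _ h9')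
      obtain ⟨v, hv⟩ := Finite.injective_iff_surjective.mp hinj (4*τ^2*(4*τ^2+9)^2)
      simp only at hv
      have hv0 : v ≠ 0 := by
        intro h
        apply hA
        rw [← hv, h]
        ring
      exact point_of_root h3 hτ h9 (cardano τ v h3 hv0 hv)
  -- the point of order three
  have heq : W.toAffine.Equation x y := by
    rw [Affine.equation_iff]
    simp only [hW]
    linear_combination heqf
  have hns : W.toAffine.Nonsingular x y :=
    (W.toAffine.equation_iff_nonsingular_of_Δ_ne_zero hΔ).mp heq
  have hnegY : W.toAffine.negY x y = -y := by
    simp only [Affine.negY, hW]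
    ring
  have hyne : y ≠ W.toAffine.negY x y := by
    rw [hnegY]
    intro h
    rcases mul_eq_zero.mp (show (2:F) * y = 0 by linear_combination h) with h' | h'
    · exact h2 h'
    · exact hy h'
  have hsl : W.toAffine.slope x x y y = (3*x^2 - 6*(τ^2+1)*x + 3) / (2*y) := by
    rw [Affine.slope_of_Y_ne rfl hyne, hnegY]
    simp only [hW]
    congr 1 <;> ring
  have hs2 : (W.toAffine.slope x x y y)^2 = 3*x - 3*(τ^2+1) := by
    rw [hsl]
    have h2y : (2*y : F) ≠ 0 := mul_ne_zero h2 hy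
    field_simp
    linear_combination (-3)*hpsi + (-4*(3*x-3*(τ^2+1)))*heqf
  have hXadd : W.toAffine.addX x x (W.toAffine.slope x x y y) = x := by
    simp only [Affine.addX, hW]
    linear_combination hs2
  have hYadd : W.toAffine.addY x x y (W.toAffine.slope x x y y) = -y := by
    rw [Affine.addY, Affine.negAddY, hXadd]
    simp only [Affine.negY, hW]
    ring
  have hadd : Affine.Point.some _ _ hns + Affine.Point.some _ _ hns = -(Affine.Point.some _ _ hns) := by
    rw [Affine.Point.add_self_of_Y_ne hyne, Affine.Point.neg_some]
    exact some_congr _ _ hXadd (hYadd.trans hnegY.symm)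
  have h3P : (3 : ℕ) • (Affine.Point.some _ _ hns) = 0 := by
    have h : (3:ℕ) • (Affine.Point.some _ _ hns) =
        Affine.Point.some _ _ hns + Affine.Point.some _ _ hns + Affine.Point.some _ _ hns := by
      rw [show (3:ℕ) = 2 + 1 by norm_num, add_nsmul, two_nsmul, one_nsmul]
    rw [h, hadd, neg_add_cancel]
  have hord : addOrderOf (Affine.Point.some _ _ hns) = 3 := by
    have hdvd : addOrderOf (Affine.Point.some _ _ hns) ∣ 3 := addOrderOf_dvd_of_nsmul_eq_zero h3P
    rcases (Nat.prime_three).eq_one_or_self_of_dvd _ hdvd with h | h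
    · exact absurd (AddMonoid.addOrderOf_eq_one_iff.mp h) (Affine.Point.some_ne_zero hns)
    · exact h
  haveI hfin0 : Finite {P : F × F // W.toAffine.Equation P.1 P.2} := Subtype.finite
  haveI := Fintype.ofFinite {P : F × F // W.toAffine.Equation P.1 P.2}
  haveI : Finite (Option {P : F × F // W.toAffine.Equation P.1 P.2}) := Finite.of_fintype _
  haveI hfin : Finite W.toAffine.Point := Finite.of_equiv _ (pointEquiv W hΔ).symm
  have hcard : ptCount W = Nat.card W.toAffine.Point := by
    rw [ptCount, Nat.card_congr (pointEquiv W hΔ), Finite.card_option, add_comm]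
  rw [hcard, ← hord]
  exact addOrderOf_dvd_natCard _

/-- Casting an integer quotient to `ZMod p` when the denominator is prime to `p`. -/
private lemma ratCast_int_div (p : ℕ) [hp : Fact p.Prime] (m n : ℤ)
    (hn : ((n : ℤ) : ZMod p) ≠ 0) :
    ((((m : ℚ) / (n : ℚ) : ℚ)) : ZMod p) = (m : ZMod p) / (n : ZMod p) := by
  have hn0 : n ≠ 0 := by rintro rfl; simp at hn
  obtain ⟨q, hq⟩ : ∃ q : ℚ, q = (m : ℚ) / (n : ℚ) := ⟨_, rfl⟩
  rw [← hq]
  have hden : ((q.den : ℤ)) ∣ n := by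
    have h := Rat.den_dvd m n
    rwa [Rat.divInt_eq_div, ← hq] at h
  have hdz : ((q.den : ℕ) : ZMod p) ≠ 0 := by
    intro h
    obtain ⟨c, hc⟩ := hden
    apply hn
    rw [hc]
    push_cast
    rw [h, zero_mul]
  have hdq : ((q.den : ℚ)) ≠ 0 := Nat.cast_ne_zero.mpr q.den_nz
  have hnq : ((n : ℚ)) ≠ 0 := Int.cast_ne_zero.mpr hn0
  have e1 : (q.num : ℚ) / (q.den : ℚ) = (m:ℚ)/(n:ℚ) := by rw [Rat.num_div_den, hq]
  have hnumZ : q.num * n = m * q.den := by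
    have h := (div_eq_div_iff hdq hnq).mp e1
    exact_mod_cast h
  rw [Rat.cast_def, div_eq_div_iff hdz hn]
  have hfin := congrArg (fun z : ℤ => (z : ZMod p)) hnumZ
  push_cast at hfin
  exact_mod_cast hfin

theorem stmt_3 (t : ℚ) (ht : t ≠ 0) (p : ℕ) [hp : Fact p.Prime] (hp2 : p ≠ 2) (hp3 : p ≠ 3)
    (hval : padicValRat p (t * (9 + 4 * t ^ 2)) = 0) :
    (Et t).Δ = -432 * t ^ 4 * (9 + 4 * t ^ 2) ∧ (Et t).Δ ≠ 0 ∧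
    (ratRed (Et t) p).Δ ≠ 0 ∧ 3 ∣ ptCount (ratRed (Et t) p) := by
  haveI : NeZero p := ⟨hp.out.ne_zero⟩
  have hΔQ : (Et t).Δ = -432 * t ^ 4 * (9 + 4 * t ^ 2) := Δ_val t
  have h9Q : (0:ℚ) < 9 + 4 * t ^ 2 := by positivity
  have hΔQ0 : (Et t).Δ ≠ 0 := by
    rw [hΔQ]
    exact mul_ne_zero (mul_ne_zero (by norm_num) (pow_ne_zero _ ht)) h9Q.ne'
  -- p-adic considerations
  set a : ℤ := t.num with ha
  set b : ℤ := (t.den : ℤ) with hb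
  have hb0 : b ≠ 0 := Int.natCast_ne_zero.mpr t.den_nz
  have ht' : t = (a : ℚ) / (b : ℚ) := by rw [ha, hb]; exact_mod_cast (Rat.num_div_den t).symm
  have ha0 : a ≠ 0 := Rat.num_ne_zero.mpr ht
  have h9b : ((9*b^2 + 4*a^2 : ℤ) : ℚ) = (9 + 4*t^2) * (b:ℚ)^2 := by
    rw [ht']
    push_cast
    field_simp
  have h9b0 : (9*b^2 + 4*a^2 : ℤ) ≠ 0 := by
    intro h
    have h' : ((9*b^2 + 4*a^2 : ℤ) : ℚ) = 0 := by exact_mod_cast h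
    rw [h9b] at h'
    exact (mul_ne_zero h9Q.ne' (pow_ne_zero _ (Int.cast_ne_zero.mpr hb0))) h'
  have hN0 : a * (9*b^2 + 4*a^2) ≠ 0 := mul_ne_zero ha0 h9b0
  have hNrat : t * (9 + 4 * t ^ 2) = ((a * (9*b^2+4*a^2) : ℤ) : ℚ) / ((b^3 : ℤ) : ℚ) := by
    rw [ht']
    push_cast
    field_simp
  have hval' : (padicValInt p (a * (9*b^2+4*a^2)) : ℤ) - padicValInt p (b^3) = 0 := by
    rw [← padicValRat.of_int, ← padicValRat.of_int,
      ← padicValRat.div (p := p) (by exact_mod_cast hN0)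
        (by exact_mod_cast pow_ne_zero 3 hb0), ← hNrat]
    exact hval
  have hp_int : Prime (p : ℤ) := Nat.prime_iff_prime_int.mp hp.out
  have hp2' : ¬ (p:ℤ) ∣ 2 := by
    intro h
    exact hp2 ((Nat.prime_dvd_prime_iff_eq hp.out Nat.prime_two).mp (by exact_mod_cast h))
  have hpb : ¬ (p:ℤ) ∣ b := by
    intro hdvd
    have hpa : ¬ (p:ℤ) ∣ a := by
      intro hpa
      have h1 : p ∣ t.num.natAbs := Int.natCast_dvd.mp hpa
      have h2 : p ∣ t.den := by rw [hb] at hdvd; exact_mod_cast hdvd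
      have hg : p ∣ 1 := t.reduced ▸ Nat.dvd_gcd h1 h2
      exact hp.out.ne_one (Nat.dvd_one.mp hg)
    have hpN : ¬ (p:ℤ) ∣ a * (9*b^2+4*a^2) := by
      intro h
      rcases hp_int.dvd_mul.mp h with h | h
      · exact hpa h
      · have h9d : (p:ℤ) ∣ 9*b^2 := Dvd.dvd.mul_left (dvd_pow hdvd two_ne_zero) 9
        have h4a : (p:ℤ) ∣ 4*a^2 := by
          have := dvd_sub h h9d
          rwa [show 9*b^2 + 4*a^2 - 9*b^2 = 4*a^2 by ring] at this
        rcases hp_int.dvd_mul.mp h4a with h' | h'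
        · have h4 : (p:ℤ) ∣ 2^2 := by
            rw [show (2:ℤ)^2 = 4 by norm_num]
            exact h'
          exact hp2' (hp_int.dvd_of_dvd_pow h4)
        · exact hpa (hp_int.dvd_of_dvd_pow h')
    have hvN : padicValInt p (a * (9*b^2+4*a^2)) = 0 := padicValInt.eq_zero_of_not_dvd hpN
    have hvb : 1 ≤ padicValInt p (b^3) := by
      have hd : (p:ℤ)^1 ∣ b^3 := by
        rw [pow_one]
        exact hdvd.trans (dvd_pow_self b three_ne_zero)
      rcases (padicValInt_dvd_iff 1 (b^3)).mp hd with h | h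
      · exact absurd h (pow_ne_zero 3 hb0)
      · exact h
    rw [hvN] at hval'
    omega
  have hvb : padicValInt p (b^3) = 0 :=
    padicValInt.eq_zero_of_not_dvd (fun h => hpb (hp_int.dvd_of_dvd_pow h))
  have hvN : padicValInt p (a * (9*b^2+4*a^2)) = 0 := by
    rw [hvb] at hval'
    omega
  have hpN : ¬ (p:ℤ) ∣ a * (9*b^2+4*a^2) := by
    intro h
    rw [← pow_one (p:ℤ)] at h
    rcases (padicValInt_dvd_iff 1 _).mp h with h' | h'
    · exact hN0 h'
    · omega
  have hpa : ¬ (p:ℤ) ∣ a := fun h => hpN (h.mul_right _)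
  have hp9 : ¬ (p:ℤ) ∣ (9*b^2+4*a^2) := fun h => hpN (h.mul_left _)
  -- pass to ZMod p
  have hbz : ((b : ℤ) : ZMod p) ≠ 0 := fun h => hpb ((ZMod.intCast_zmod_eq_zero_iff_dvd b p).mp h)
  have haz : ((a : ℤ) : ZMod p) ≠ 0 := fun h => hpa ((ZMod.intCast_zmod_eq_zero_iff_dvd a p).mp h)
  have h9z : ((9*b^2+4*a^2 : ℤ) : ZMod p) ≠ 0 :=
    fun h => hp9 ((ZMod.intCast_zmod_eq_zero_iff_dvd _ p).mp h)
  have h2 : (2 : ZMod p) ≠ 0 := by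
    intro h
    apply hp2
    have h' : ((2:ℕ) : ZMod p) = 0 := by exact_mod_cast h
    exact ((Nat.prime_dvd_prime_iff_eq hp.out Nat.prime_two).mp
      ((ZMod.natCast_eq_zero_iff 2 p).mp h'))
  have h3 : (3 : ZMod p) ≠ 0 := by
    intro h
    apply hp3
    have h' : ((3:ℕ) : ZMod p) = 0 := by exact_mod_cast h
    exact ((Nat.prime_dvd_prime_iff_eq hp.out Nat.prime_three).mp
      ((ZMod.natCast_eq_zero_iff 3 p).mp h'))
  set τ : ZMod p := ((a : ℤ) : ZMod p) / ((b : ℤ) : ZMod p) with hτdef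
  have hτ : τ ≠ 0 := div_ne_zero haz hbz
  have h9τ : (9 : ZMod p) + 4*τ^2 ≠ 0 := by
    intro h
    apply h9z
    have e : ((9*b^2+4*a^2 : ℤ) : ZMod p) = ((b : ℤ) : ZMod p)^2 * (9 + 4*τ^2) := by
      rw [hτdef]
      push_cast
      field_simp
    rw [e, h, mul_zero]
  -- the reduction of the curve
  have hb2z : ((b^2 : ℤ) : ZMod p) ≠ 0 := by
    push_cast
    exact pow_ne_zero 2 hbz
  have hcoef : ((-(3*(t^2+1)) : ℚ) : ZMod p) = -(3*(τ^2+1)) := by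
    have e : (-(3*(t^2+1)) : ℚ) = ((-(3*(a^2+b^2)) : ℤ) : ℚ) / ((b^2 : ℤ) : ℚ) := by
      rw [ht']
      push_cast
      field_simp
    rw [e, ratCast_int_div p _ _ hb2z, hτdef]
    push_cast
    field_simp
  have hred : ratRed (Et t) p = (⟨0, -(3*(τ^2+1)), 0, 3, -1⟩ : WeierstrassCurve (ZMod p)) := by
    simp only [ratRed, Et]
    congr 1
    · exact Rat.cast_zero
    · exact Rat.cast_zero
    · exact Rat.cast_ofNat 3
    · rw [Rat.cast_neg, Rat.cast_one]
  have hΔp : (ratRed (Et t) p).Δ ≠ 0 := by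
    rw [hred, Δ_val]
    have h432 : (432 : ZMod p) ≠ 0 := by
      have h : (432 : ZMod p) = 2^4 * 3^3 := by norm_num
      rw [h]
      exact mul_ne_zero (pow_ne_zero _ h2) (pow_ne_zero _ h3)
    exact mul_ne_zero (mul_ne_zero (neg_ne_zero.mpr h432) (pow_ne_zero _ hτ)) h9τ
  refine ⟨hΔQ, hΔQ0, hΔp, ?_⟩
  rw [hred]
  exact key_dvd h2 h3 hτ h9τ
end

section
/- Let k ≥ 1 be an integer and ε = ±1, and consider the elliptic curves over ℚ given by E¹_k : y² + (1 − ε5ᵏ)xy − ε5ᵏy = x³ − ε5ᵏx² and E²_k : y² + (ε5ᵏ − 1)xy − 5^{2k}y = x³ − ε5ᵏx². Then: (i) the discriminant of E¹_k is Δ(E¹_k) = ε·5^{5k}·(5^{2k} − 11ε5ᵏ − 1) and its c₄-invariant is c₄(E¹_k) = 1 + 12ε5ᵏ + 14·5^{2k} − 12ε5^{3k} + 5^{4k}; in particular ν₅(Δ(Eⁱ_k)) = 5k and ν₅(c₄(Eⁱ_k)) = 0 for i = 1, 2, so that Eⁱ_k has (split) multiplicative reduction of Kodaira type I_{5k} at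 5; (ii) for i = 1, 2 and every prime ℓ ≠ 5, ℓ does not divide both c₄(Eⁱ_k) and Δ(Eⁱ_k); consequently Eⁱ_k has no primes of additive reduction. -/
/-!
Both curves are models of the Tate normal form `E(b) : y² + (1 − b)xy − by = x³ − bx²` of an
elliptic curve with a point of order 5: `E¹_k = E(ε5ᵏ)`, and `E²_k` is `E(−ε5ᵏ)` after the change
of variables `(u, r, s, t) = (−1, −ε5ᵏ, −ε5ᵏ, 5^{2k})`, which preserves `c₄` and `Δ`.
For this family `Δ = b⁵(b² − 11b − 1)` and `c₄ ≡ 1 (mod b)`, and an explicit combination of `c₄`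
and `b² − 11b − 1` equals `5`. So a prime dividing both `c₄` and `Δ` cannot divide `b`, hence
divides `b² − 11b − 1`, hence is `5`, which is excluded once `5 ∣ b`. Since also
`b² − 11b − 1 ≡ −1 (mod b)`, `ν₅(Δ) = 5ν₅(b)`.
-/

open WeierstrassCurve

/-- The integral model `E¹_k : y² + (1 − ε5ᵏ)xy − ε5ᵏy = x³ − ε5ᵏx²`. -/
def E1 (k : ℕ) (ε : ℤ) : WeierstrassCurve ℤ :=
  ⟨1 - ε * 5 ^ k, -(ε * 5 ^ k), -(ε * 5 ^ k), 0, 0⟩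

/-- The integral model `E²_k : y² + (ε5ᵏ − 1)xy − 5^{2k}y = x³ − ε5ᵏx²`. -/
def E2 (k : ℕ) (ε : ℤ) : WeierstrassCurve ℤ :=
  ⟨ε * 5 ^ k - 1, -(ε * 5 ^ k), -(5 ^ (2 * k)), 0, 0⟩

section TateNormalForm

variable {R : Type*} [CommRing R] (b : R)

def tateNormalFive : WeierstrassCurve R := ⟨1 - b, -b, -b, 0, 0⟩

lemma tateNormalFive_c₄ :
    (tateNormalFive b).c₄ = 1 + b * (12 + 14 * b - 12 * b ^ 2 + b ^ 3) := by
  simp only [tateNormalFive, c₄, b₂, b₄]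
  ring

lemma tateNormalFive_Δ : (tateNormalFive b).Δ = b ^ 5 * (b ^ 2 - 11 * b - 1) := by
  simp only [tateNormalFive, Δ, b₂, b₄, b₆, b₈]
  ring

lemma tateNormalFive_c₄_bezout :
    (122 - 11 * b) * (tateNormalFive b).c₄
      + (117 + 166 * b - 133 * b ^ 2 + 11 * b ^ 3) * (b ^ 2 - 11 * b - 1) = 5 := by
  rw [tateNormalFive_c₄]
  ring

lemma smul_tateNormalFive_neg :
    (⟨-1, -b, -b, b ^ 2⟩ : VariableChange R) • tateNormalFive (-b) = ⟨b - 1, -b, -b ^ 2, 0, 0⟩ := by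
  simp only [variableChange_def, tateNormalFive, inv_neg, inv_one, Units.val_neg, Units.val_one]
  ext <;> ring

end TateNormalForm

lemma padicValInt_pow {p : ℕ} [Fact p.Prime] (a : ℤ) (n : ℕ) :
    padicValInt p (a ^ n) = n * padicValInt p a := by
  simp only [padicValInt, Int.natAbs_pow, padicValNat.pow]

lemma padicValInt_neg {p : ℕ} (a : ℤ) : padicValInt p (-a) = padicValInt p a := by
  simp only [padicValInt, Int.natAbs_neg]

section Integral

variable {b : ℤ}

lemma prime_eq_five_of_dvd_tateNormalFive {ℓ : ℕ} (hℓ : ℓ.Prime)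
    (hc : (ℓ : ℤ) ∣ (tateNormalFive b).c₄) (hΔ : (ℓ : ℤ) ∣ (tateNormalFive b).Δ) : ℓ = 5 := by
  have hℓb : ¬(ℓ : ℤ) ∣ b := fun hb ↦ by
    have h1 : (ℓ : ℤ) ∣ 1 := by
      have := dvd_sub hc (hb.mul_right (12 + 14 * b - 12 * b ^ 2 + b ^ 3))
      rwa [tateNormalFive_c₄, add_sub_cancel_right] at this
    exact hℓ.not_dvd_one (Int.natCast_dvd_natCast.mp h1)
  rw [tateNormalFive_Δ] at hΔ
  have hm : (ℓ : ℤ) ∣ b ^ 2 - 11 * b - 1 :=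
    (Int.Prime.dvd_mul' hℓ hΔ).resolve_left fun h ↦ hℓb (Int.Prime.dvd_pow' hℓ h)
  have h5 : (ℓ : ℤ) ∣ 5 := tateNormalFive_c₄_bezout b ▸ dvd_add (hc.mul_left _) (hm.mul_left _)
  exact (Nat.prime_dvd_prime_iff_eq hℓ Nat.prime_five).mp (by exact_mod_cast h5)

lemma not_five_dvd_tateNormalFive_c₄ (hb : 5 ∣ b) : ¬(5 : ℤ) ∣ (tateNormalFive b).c₄ := by
  rw [tateNormalFive_c₄, dvd_add_left (hb.mul_right _)]
  norm_num

lemma not_dvd_tateNormalFive_c₄_and_Δ (hb : 5 ∣ b) {ℓ : ℕ} (hℓ : ℓ.Prime) :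
    ¬((ℓ : ℤ) ∣ (tateNormalFive b).c₄ ∧ (ℓ : ℤ) ∣ (tateNormalFive b).Δ) := by
  rintro ⟨hc, hΔ⟩
  obtain rfl := prime_eq_five_of_dvd_tateNormalFive hℓ hc hΔ
  exact not_five_dvd_tateNormalFive_c₄ hb hc

lemma padicValInt_tateNormalFive_c₄ (hb : 5 ∣ b) : padicValInt 5 (tateNormalFive b).c₄ = 0 :=
  padicValInt.eq_zero_of_not_dvd (not_five_dvd_tateNormalFive_c₄ hb)

lemma padicValInt_tateNormalFive_Δ (hb : 5 ∣ b) (hb0 : b ≠ 0) :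
    padicValInt 5 (tateNormalFive b).Δ = 5 * padicValInt 5 b := by
  have : Fact (Nat.Prime 5) := ⟨Nat.prime_five⟩
  have hm : ¬(5 : ℤ) ∣ b ^ 2 - 11 * b - 1 := by
    rw [show b ^ 2 - 11 * b - 1 = b * (b - 11) - 1 by ring, dvd_sub_right (hb.mul_right _)]
    norm_num
  have hm0 : b ^ 2 - 11 * b - 1 ≠ 0 := fun h ↦ hm (by rw [h]; exact dvd_zero 5)
  rw [tateNormalFive_Δ, padicValInt.mul (pow_ne_zero 5 hb0) hm0, padicValInt_pow,
    padicValInt.eq_zero_of_not_dvd hm, add_zero]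

end Integral

lemma E1_eq (k : ℕ) (ε : ℤ) : E1 k ε = tateNormalFive (ε * 5 ^ k) := rfl

lemma E2_eq_smul (k : ℕ) {ε : ℤ} (hε : ε ^ 2 = 1) :
    E2 k ε = (⟨-1, -(ε * 5 ^ k), -(ε * 5 ^ k), (ε * 5 ^ k) ^ 2⟩ : VariableChange ℤ) •
      tateNormalFive (-(ε * 5 ^ k)) := by
  rw [smul_tateNormalFive_neg, E2, mul_pow, hε, one_mul, ← pow_mul, mul_comm k]

theorem stmt_6 (k : ℕ) (hk : 1 ≤ k) (ε : ℤ) (hε : ε = 1 ∨ ε = -1) :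
    -- (i)
    ((E1 k ε).Δ = ε * 5 ^ (5 * k) * (5 ^ (2 * k) - 11 * ε * 5 ^ k - 1) ∧
     (E1 k ε).c₄ = 1 + 12 * ε * 5 ^ k + 14 * 5 ^ (2 * k) - 12 * ε * 5 ^ (3 * k) + 5 ^ (4 * k) ∧
     padicValInt 5 (E1 k ε).Δ = 5 * k ∧ padicValInt 5 (E1 k ε).c₄ = 0 ∧
     padicValInt 5 (E2 k ε).Δ = 5 * k ∧ padicValInt 5 (E2 k ε).c₄ = 0) ∧
    -- (ii)
    ((∀ ℓ : ℕ, ℓ.Prime → ℓ ≠ 5 →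
        ¬((ℓ : ℤ) ∣ (E1 k ε).c₄ ∧ (ℓ : ℤ) ∣ (E1 k ε).Δ) ∧
        ¬((ℓ : ℤ) ∣ (E2 k ε).c₄ ∧ (ℓ : ℤ) ∣ (E2 k ε).Δ)) ∧
     (∀ ℓ : ℕ, ℓ.Prime →
        ¬((ℓ : ℤ) ∣ (E1 k ε).c₄ ∧ (ℓ : ℤ) ∣ (E1 k ε).Δ) ∧
        ¬((ℓ : ℤ) ∣ (E2 k ε).c₄ ∧ (ℓ : ℤ) ∣ (E2 k ε).Δ))) := by
  have hε2 : ε ^ 2 = 1 := by rcases hε with rfl | rfl <;> norm_num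
  have hνt : padicValInt 5 (ε * 5 ^ k) = k := by
    rcases hε with rfl | rfl <;> simp [padicValInt, Int.natAbs_pow]
  have hE2c₄ : (E2 k ε).c₄ = (tateNormalFive (-(ε * 5 ^ k))).c₄ := by
    simp [E2_eq_smul k hε2, variableChange_c₄]
  have hE2Δ : (E2 k ε).Δ = (tateNormalFive (-(ε * 5 ^ k))).Δ := by
    simp [E2_eq_smul k hε2, variableChange_Δ]
  have h5t : (5 : ℤ) ∣ ε * 5 ^ k := (dvd_pow_self 5 (by omega)).mul_left ε
  have ht0 : ε * 5 ^ k ≠ 0 := by rcases hε with rfl | rfl <;> simp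
  have hnoadd (ℓ : ℕ) (hℓ : ℓ.Prime) :
      ¬((ℓ : ℤ) ∣ (E1 k ε).c₄ ∧ (ℓ : ℤ) ∣ (E1 k ε).Δ) ∧
        ¬((ℓ : ℤ) ∣ (E2 k ε).c₄ ∧ (ℓ : ℤ) ∣ (E2 k ε).Δ) := by
    rw [hE2c₄, hE2Δ]
    exact ⟨not_dvd_tateNormalFive_c₄_and_Δ h5t hℓ,
      not_dvd_tateNormalFive_c₄_and_Δ (dvd_neg.mpr h5t) hℓ⟩
  refine ⟨⟨?_, ?_, ?_, padicValInt_tateNormalFive_c₄ h5t, ?_, ?_⟩,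
    fun ℓ hℓ _ ↦ hnoadd ℓ hℓ, hnoadd⟩
  · rw [E1_eq, tateNormalFive_Δ]
    rcases hε with rfl | rfl <;> ring
  · rw [E1_eq, tateNormalFive_c₄]
    rcases hε with rfl | rfl <;> ring
  · rw [E1_eq, padicValInt_tateNormalFive_Δ h5t ht0, hνt]
  · rw [hE2Δ, padicValInt_tateNormalFive_Δ (dvd_neg.mpr h5t) (neg_ne_zero.mpr ht0),
      padicValInt_neg, hνt]
  · rw [hE2c₄, padicValInt_tateNormalFive_c₄ (dvd_neg.mpr h5t)]
end

section
/- Let E be an elliptic curve over ℚ with E(ℚ)_tors ≅ ℤ/6ℤ, and suppose d is a squarefree integer, d ≠ 1, such that the quadratic twist E^d satisfies ℤ/6ℤ ⊆ E^d(ℚ)_tors. Then d = −3. -/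
set_option synthInstance.maxHeartbeats 400000
set_option maxHeartbeats 800000

/-!
STATEMENT 18: Let `E` be an elliptic curve over `ℚ` with `E(ℚ)_tors ≅ ℤ/6ℤ`, and let `d ≠ 1`
be a squarefree integer such that the quadratic twist `E^d` satisfies
`ℤ/6ℤ ⊆ E^d(ℚ)_tors`.  Then `d = −3`.

The quadratic twist of a Weierstrass curve `W` over a field of characteristic `≠ 2` by `d` is
`y² = x³ + d·(b₂/4)·x² + d²·(b₄/2)·x + d³·(b₆/4)`.  The containment `ℤ/6ℤ ⊆ E^d(ℚ)_tors` is
formalized as the existence of a point of order `6` in `E^d(ℚ)`.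
-/

open WeierstrassCurve

/-- The quadratic twist by `d` of a Weierstrass curve over a field of characteristic `≠ 2`. -/
def quadTwist {F : Type*} [Field F] (W : WeierstrassCurve F) (d : F) : WeierstrassCurve F :=
  ⟨0, d * W.b₂ / 4, 0, d ^ 2 * W.b₄ / 2, d ^ 3 * W.b₆ / 4⟩

/-- The torsion subgroup of `E(ℚ)`. -/
noncomputable abbrev torsQ (E : WeierstrassCurve ℚ) :=
  AddCommGroup.torsion E.toAffine.Point


lemma core_alg (A B C C1 z d t s0 : ℚ) (hs0 : s0 ≠ 0) (hC : C = s0^2/4)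
    (ht : t ≠ 0) (htt : t^2 = d*C1)
    (hB0 : B^2 = 4*A*C) (hC1 : C1 = z^3+A*z^2+B*z+C)
    (hR : z*(3*z^3+4*A*z^2+6*B*z+12*C) = 0) :
    (∃ v : ℚ, (d : ℚ) = v^2) ∨ (∃ v : ℚ, (-3*d : ℚ) = v^2) := by
  have hC1ne : C1 ≠ 0 := by
    intro h
    exact ht (by simpa [h] using (pow_eq_zero_iff (two_ne_zero)).1 (htt.trans (by rw [h, mul_zero])))
  by_cases hz : z = 0
  · subst hz
    left
    refine ⟨2*t/s0, ?_⟩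
    rw [div_pow, eq_div_iff (pow_ne_zero 2 hs0)]
    linear_combination (-4)*htt + (-4*d)*hC1 + (-4*d)*hC
  · have hR' : 3*z^3+4*A*z^2+6*B*z+12*C = 0 := by
      rcases mul_eq_zero.1 hR with h | h
      · exact absurd h hz
      · exact h
    by_cases hA : A = 0
    · subst hA
      have hB : B = 0 := by
        have : B^2 = 0 := by rw [hB0]; ring
        exact (pow_eq_zero_iff (two_ne_zero)).1 this
      subst hB
      have hz3 : z^3 = -4*C := by linear_combination (1/3)*hR'
      have hC1v : C1 = -3*C := by linear_combination hC1 + hz3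
      right
      refine ⟨2*t/s0, ?_⟩
      rw [div_pow, eq_div_iff (pow_ne_zero 2 hs0)]
      linear_combination (-4)*htt + (-4*d)*hC1v + (12*d)*hC
    · by_cases hA1 : A + 3*z = 0
      · have hB3 : B = 3*z^2 := by
          have h : (B-3*z^2)^2 = 0 := by
            linear_combination hB0 + (4*C+4*z^3)*hA1 - z*hR'
          have := (pow_eq_zero_iff (two_ne_zero)).1 h
          linarith [sub_eq_zero.1 this]
        have hAv : A = -3*z := by linarith
        subst hB3; subst hAv
        have hC3 : 3*z^3 = -4*C := by
          have h9 : z*(9*z^3) = z*(-12*C) := by linear_combination hB0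
          have := mul_left_cancel₀ hz h9
          linarith
        have hC1v : C1 = -C/3 := by linear_combination hC1 + (1/3)*hC3
        right
        refine ⟨6*t/s0, ?_⟩
        rw [div_pow, eq_div_iff (pow_ne_zero 2 hs0)]
        linear_combination (-36)*htt + (-36*d)*hC1v + (12*d)*hC
      · -- generic case
        have hkey : (3*(B+A*z))^2 = -3*A*(A+3*z)*z^2 := by
          linear_combination 9*hB0 + (3*A)*hR'
        have hB1sq : (3*z^2+2*A*z+B)^2 = 4*(A+3*z)*C1 := by
          linear_combination hB0 - z*hR' - 4*(A+3*z)*hC1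
        right
        refine ⟨3*(B+A*z)*B*(3*z^2+2*A*z+B)*t / (2*A*(A+3*z)*z*s0*C1), ?_⟩
        have hden : 2*A*(A+3*z)*z*s0*C1 ≠ 0 := by
          apply mul_ne_zero
          apply mul_ne_zero
          apply mul_ne_zero
          apply mul_ne_zero
          apply mul_ne_zero
          · norm_num
          · exact hA
          · exact hA1
          · exact hz
          · exact hs0
          · exact hC1ne
        rw [div_pow, eq_div_iff (pow_ne_zero 2 hden)]
        have e1 : (3*(B+A*z)*B*(3*z^2+2*A*z+B)*t)^2
            = (3*(B+A*z))^2 * B^2 * ((3*z^2+2*A*z+B)^2) * t^2 := by ring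
        rw [e1, hkey, hB0, hB1sq, htt, hC]
        ring

lemma main_alg (b2 b4 b6 d x0 s0 x1 s1 : ℚ) (hd : d ≠ 0)
    (hs0 : s0 ≠ 0) (hg0 : s0^2 = 4*x0^3+b2*x0^2+2*b4*x0+b6)
    (hk0 : (3*x0^2+(b2/2)*x0+b4/2)^2 = (3*x0+b2/4)*s0^2)
    (hs1 : s1 ≠ 0) (hg1 : s1^2 = 4*x1^3+(d*b2)*x1^2+2*(d^2*b4)*x1+(d^3*b6))
    (hk1 : (3*x1^2+((d*b2)/2)*x1+(d^2*b4)/2)^2 = (3*x1+(d*b2)/4)*s1^2) :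
    (∃ v : ℚ, d = v^2) ∨ (∃ v : ℚ, -3*d = v^2) := by
  obtain ⟨u, rfl⟩ : ∃ u, x1 = d*u := ⟨x1/d, by field_simp⟩
  have h2d : (2*d : ℚ) ≠ 0 := mul_ne_zero two_ne_zero hd
  have ht : s1/(2*d) ≠ 0 := div_ne_zero hs1 h2d
  have htt : (s1/(2*d))^2 = d*(u^3+(b2/4)*u^2+(b4/2)*u+b6/4) := by
    rw [div_pow, div_eq_iff (pow_ne_zero 2 h2d)]
    linear_combination hg1
  have hB0 : (3*x0^2+(b2/2)*x0+b4/2)^2 = 4*(3*x0+b2/4)*(s0^2/4) := by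
    linear_combination hk0
  have hC1d : (u^3+(b2/4)*u^2+(b4/2)*u+b6/4) =
      (u-x0)^3+(3*x0+b2/4)*(u-x0)^2+(3*x0^2+(b2/2)*x0+b4/2)*(u-x0)+s0^2/4 := by
    linear_combination (-1/4)*hg0
  have hB1u : (3*u^2+(b2/2)*u+b4/2)^2 = 4*(3*u+b2/4)*(u^3+(b2/4)*u^2+(b4/2)*u+b6/4) := by
    apply mul_left_cancel₀ (pow_ne_zero 4 hd)
    linear_combination hk1 + d*(3*u+b2/4)*hg1
  have hR : (u-x0)*(3*(u-x0)^3+4*(3*x0+b2/4)*(u-x0)^2+6*(3*x0^2+(b2/2)*x0+b4/2)*(u-x0)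
      +12*(s0^2/4)) = 0 := by
    linear_combination hB0 - hB1u - 4*(3*u+b2/4)*hC1d
  exact core_alg (3*x0+b2/4) (3*x0^2+(b2/2)*x0+b4/2) (s0^2/4)
    (u^3+(b2/4)*u^2+(b4/2)*u+b6/4) (u-x0) d (s1/(2*d)) s0 hs0 rfl ht htt hB0 hC1d hR

lemma order3_facts {W : WeierstrassCurve ℚ} (P : W.toAffine.Point)
    (h3 : P + P + P = 0) (h2 : P + P ≠ 0) :
    ∃ x y : ℚ, W.toAffine.Equation x y ∧ (2*y + W.a₁*x + W.a₃) ≠ 0 ∧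
      (3*x^2 + (W.b₂/2)*x + W.b₄/2)^2 = (3*x + W.b₂/4) * (2*y + W.a₁*x + W.a₃)^2 := by
  rcases P with _ | @⟨x, y, h⟩
  · exact absurd (by simp [← Affine.Point.zero_def]) h2
  · have hy : y ≠ W.toAffine.negY x y := by
      intro hy
      exact h2 (Affine.Point.add_self_of_Y_eq hy)
    have hs : 2*y + W.a₁*x + W.a₃ ≠ 0 := by
      intro hcon
      apply hy
      simp only [Affine.negY]
      linarith
    have hadd := Affine.Point.add_self_of_Y_ne (h₁ := h) hy
    have hne : Affine.Point.some x y h + Affine.Point.some x y h = -(Affine.Point.some x y h) :=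
      eq_neg_of_add_eq_zero_left h3
    rw [hadd, Affine.Point.neg_some] at hne
    have hx : W.toAffine.addX x x (W.toAffine.slope x x y y) = x := by
      injection hne
    rw [Affine.slope_of_Y_ne rfl hy] at hx
    have hsY : y - W.toAffine.negY x y ≠ 0 := sub_ne_zero.2 hy
    simp only [Affine.addX, Affine.negY] at hx
    have hs2 : y - (-y - W.toAffine.a₁*x - W.toAffine.a₃) ≠ 0 := by
      intro hcon; apply hs; show (2:ℚ)*y + W.a₁*x + W.a₃ = 0; linarith
    have hs2' : y - (-y - x * W.toAffine.a₁ - W.toAffine.a₃) ≠ 0 := by rwa [mul_comm x]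
    field_simp [hs2] at hx
    refine ⟨x, y, h.1, hs, ?_⟩
    have key : (2*y + W.a₁*x + W.a₃) * ((3*x^2 + (W.b₂/2)*x + W.b₄/2)^2
        - (3*x + W.b₂/4) * (2*y + W.a₁*x + W.a₃)^2) = 0 := by
      simp only [WeierstrassCurve.b₂, WeierstrassCurve.b₄]
      linear_combination (2*y + W.a₁*x + W.a₃) * hx
    rcases mul_eq_zero.1 key with h' | h'
    · exact absurd h' hs
    · linear_combination h'

lemma eqsq (W : WeierstrassCurve ℚ) (x y : ℚ) (hxy : W.toAffine.Equation x y) :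
    (2*y + W.a₁*x + W.a₃)^2 = 4*x^3+W.b₂*x^2+2*W.b₄*x+W.b₆ := by
  rw [Affine.equation_iff] at hxy
  simp only [WeierstrassCurve.b₂, WeierstrassCurve.b₄, WeierstrassCurve.b₆]
  linear_combination 4*hxy

theorem stmt_18 (E : WeierstrassCurve ℚ) (hE : E.Δ ≠ 0)
    (htors : Nonempty (torsQ E ≃+ ZMod 6))
    (d : ℤ) (hd : Squarefree d) (hd1 : d ≠ 1)
    (hgrow : ∃ P : (quadTwist E (d : ℚ)).toAffine.Point, addOrderOf P = 6) :
    d = -3 := by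
  obtain ⟨e⟩ := htors
  -- a point of order 3 on E
  set g : torsQ E := e.symm 2 with hgdef
  have hg3 : g + g + g = 0 := by
    rw [hgdef, ← map_add, ← map_add]
    have : (2 : ZMod 6) + 2 + 2 = 0 := by decide
    rw [this, map_zero]
  have hg2 : g + g ≠ 0 := by
    rw [hgdef, ← map_add]
    intro hcon
    rw [← map_zero e.symm] at hcon
    have := e.symm.injective hcon
    exact absurd this (by decide)
  have hp3 : (g : E.toAffine.Point) + g + g = 0 := by
    have := congrArg (Subtype.val) hg3
    push_cast at this
    exact this
  have hp2 : (g : E.toAffine.Point) + g ≠ 0 := by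
    intro hcon
    apply hg2
    apply Subtype.ext
    push_cast
    exact hcon
  -- a point of order 3 on the twist
  obtain ⟨P, hP⟩ := hgrow
  have h6 : (6 : ℕ) • P = 0 := by rw [← hP]; exact addOrderOf_nsmul_eq_zero P
  have hq3 : (P+P) + (P+P) + (P+P) = 0 := by
    have h : (P+P) + (P+P) + (P+P) = (6 : ℕ) • P := by abel
    rw [h, h6]
  have hq2 : (P+P) + (P+P) ≠ 0 := by
    have h : (P+P) + (P+P) = (4 : ℕ) • P := by abel
    rw [h]
    intro hcon
    have := addOrderOf_dvd_of_nsmul_eq_zero hcon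
    rw [hP] at this
    norm_num at this
  obtain ⟨x0, y0, heq0, hs0, hk0⟩ := order3_facts _ hp3 hp2
  obtain ⟨x1, y1, heq1, hs1, hk1⟩ := order3_facts _ hq3 hq2
  have hg0 := eqsq E x0 y0 heq0
  have hg1 := eqsq _ x1 y1 heq1
  have tb2 : (quadTwist E (d:ℚ)).b₂ = (d:ℚ) * E.b₂ := by
    simp only [quadTwist, WeierstrassCurve.b₂]; ring
  have tb4 : (quadTwist E (d:ℚ)).b₄ = (d:ℚ)^2 * E.b₄ := by
    simp only [quadTwist, WeierstrassCurve.b₄]; ring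
  have tb6 : (quadTwist E (d:ℚ)).b₆ = (d:ℚ)^3 * E.b₆ := by
    simp only [quadTwist, WeierstrassCurve.b₆]; ring
  rw [tb2, tb4, tb6] at hg1
  rw [tb2, tb4] at hk1
  have hdQ : (d : ℚ) ≠ 0 := Int.cast_ne_zero.2 hd.ne_zero
  have := main_alg E.b₂ E.b₄ E.b₆ (d:ℚ) x0 _ x1 _ hdQ hs0 hg0 hk0 hs1 hg1 hk1
  rcases this with ⟨v, hv⟩ | ⟨v, hv⟩
  · exfalso
    have hsq : IsSquare ((d : ℤ) : ℚ) := ⟨v, by rw [hv]; ring⟩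
    obtain ⟨k, hk⟩ := Rat.isSquare_intCast_iff.1 hsq
    have : IsUnit k := hd k (by rw [hk])
    rcases Int.isUnit_iff.1 this with h | h <;> rw [h] at hk <;> omega
  · have hsq : IsSquare (((-3*d : ℤ)) : ℚ) := ⟨v, by push_cast; rw [hv]; ring⟩
    obtain ⟨k, hk⟩ := Rat.isSquare_intCast_iff.1 hsq
    have h3k : (3 : ℤ) ∣ k := by
      have hprime : Prime (3 : ℤ) := Int.prime_three
      rcases (hprime.dvd_mul.1 ⟨-d, by linarith⟩) with h | h <;> exact h
    obtain ⟨j, rfl⟩ := h3k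
    have hdj : d = -3 * (j * j) := by linarith
    have : IsUnit j := hd j ⟨-3, by linarith⟩
    rcases Int.isUnit_iff.1 this with h | h <;> rw [h] at hdj <;> omega
end

section
/- Let E be an elliptic curve over ℚ with E(ℚ)_tors ≅ ℤ/2ℤ × ℤ/4ℤ, and suppose d is a squarefree integer, d ≠ 1, such that the quadratic twist E^d also satisfies E^d(ℚ)_tors ≅ ℤ/2ℤ × ℤ/4ℤ. Then d = −1. -/
set_option synthInstance.maxHeartbeats 400000
set_option maxHeartbeats 800000

/-!
STATEMENT 19: Let `E` be an elliptic curve over `ℚ` with `E(ℚ)_tors ≅ ℤ/2ℤ × ℤ/4ℤ`, and let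
`d ≠ 1` be a squarefree integer such that the quadratic twist `E^d` also satisfies
`E^d(ℚ)_tors ≅ ℤ/2ℤ × ℤ/4ℤ`.  Then `d = −1`.

The quadratic twist of a Weierstrass curve `W` over a field of characteristic `≠ 2` by `d` is
`y² = x³ + d·(b₂/4)·x² + d²·(b₄/2)·x + d³·(b₆/4)`.
-/

open WeierstrassCurve

namespace Stmt19

open WeierstrassCurve.Affine WeierstrassCurve.Affine.Point

/-- The 2-division cubic (monic version). -/
def psi (W : WeierstrassCurve ℚ) (X : ℚ) : ℚ :=
  X ^ 3 + W.b₂ / 4 * X ^ 2 + W.b₄ / 2 * X + W.b₆ / 4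

lemma eq_some_of_ne_zero {W : Affine ℚ} {Q : W.Point} (h : Q ≠ 0) :
    ∃ x y, ∃ hn : W.Nonsingular x y, Q = .some _ _ hn := by
  cases Q with
  | zero => exact absurd rfl h
  | some _ _ hn => exact ⟨_, _, hn, rfl⟩

lemma two_torsion {W : Affine ℚ} {x y : ℚ} (hn : W.Nonsingular x y)
    (h2 : Point.some _ _ hn + Point.some _ _ hn = 0) :
    y = W.negY x y ∧ psi W x = 0 := by
  have hy : y = W.negY x y := by
    by_contra hy
    have h := add_self_of_Y_ne (h₁ := hn) hy
    rw [h2] at h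
    exact some_ne_zero _ h.symm
  refine ⟨hy, ?_⟩
  have heq := hn.1
  rw [equation_iff] at heq
  rw [negY] at hy
  simp only [psi, b₂, b₄, b₆]
  linear_combination -heq + ((2 * y + W.a₁ * x + W.a₃) / 4) * hy

lemma double_sub_root {W : Affine ℚ} {x y u : ℚ} (heq0 : W.Equation x y)
    (hy : y ≠ W.negY x y) (hu : psi W u = 0) :
    ∃ q : ℚ, W.addX x x (W.slope x x y y) - u = q ^ 2 := by
  have heq := (W.equation_iff x y).mp heq0
  have hy' : 2 * y + W.a₁ * x + W.a₃ ≠ 0 := by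
    intro h; apply hy; rw [negY]; linarith
  have hslope : W.slope x x y y =
      (3 * x ^ 2 + 2 * W.a₂ * x + W.a₄ - W.a₁ * y) / (2 * y + W.a₁ * x + W.a₃) := by
    rw [slope_of_Y_ne rfl hy, negY]; ring_nf
  refine ⟨(x ^ 2 - 2 * u * x - W.b₂ / 2 * u - 2 * u ^ 2 - W.b₄ / 2) /
      (2 * y + W.a₁ * x + W.a₃), ?_⟩
  simp only [psi, b₂, b₄, b₆] at hu
  have step1 : (W.addX x x (W.slope x x y y) - u) * (2 * y + W.a₁ * x + W.a₃) ^ 2 =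
      (3 * x ^ 2 + 2 * W.a₂ * x + W.a₄ - W.a₁ * y) ^ 2 +
        W.a₁ * (3 * x ^ 2 + 2 * W.a₂ * x + W.a₄ - W.a₁ * y) * (2 * y + W.a₁ * x + W.a₃) -
        (W.a₂ + 2 * x + u) * (2 * y + W.a₁ * x + W.a₃) ^ 2 := by
    rw [addX, hslope]
    have e : (3 * x ^ 2 + 2 * W.a₂ * x + W.a₄ - W.a₁ * y) / (2 * y + W.a₁ * x + W.a₃) *
        (2 * y + W.a₁ * x + W.a₃) = 3 * x ^ 2 + 2 * W.a₂ * x + W.a₄ - W.a₁ * y :=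
      div_mul_cancel₀ _ hy'
    linear_combination ((3 * x ^ 2 + 2 * W.a₂ * x + W.a₄ - W.a₁ * y) / (2 * y + W.a₁ * x + W.a₃) *
        (2 * y + W.a₁ * x + W.a₃) + (3 * x ^ 2 + 2 * W.a₂ * x + W.a₄ - W.a₁ * y) +
        W.a₁ * (2 * y + W.a₁ * x + W.a₃)) * e
  have step2 : (3 * x ^ 2 + 2 * W.a₂ * x + W.a₄ - W.a₁ * y) ^ 2 +
        W.a₁ * (3 * x ^ 2 + 2 * W.a₂ * x + W.a₄ - W.a₁ * y) * (2 * y + W.a₁ * x + W.a₃) -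
        (W.a₂ + 2 * x + u) * (2 * y + W.a₁ * x + W.a₃) ^ 2 =
      (x ^ 2 - 2 * u * x - W.b₂ / 2 * u - 2 * u ^ 2 - W.b₄ / 2) ^ 2 := by
    simp only [b₂, b₄]
    linear_combination (-(W.a₁ ^ 2 + 4 * W.a₂ + 8 * x + 4 * u)) * heq +
      (-(W.a₁ ^ 2 + 4 * W.a₂ + 8 * x + 4 * u)) * hu
  rw [div_pow, eq_div_iff (pow_ne_zero 2 hy'), step1, step2]

lemma extract (W : WeierstrassCurve ℚ)
    (h : Nonempty (torsQ W ≃+ (ZMod 2) × (ZMod 4))) :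
    ∃ r s t : ℚ, psi W r = 0 ∧ psi W s = 0 ∧ psi W t = 0 ∧
      r ≠ s ∧ r ≠ t ∧ s ≠ t ∧ (∃ q : ℚ, s - r = q ^ 2) ∧ (∃ q : ℚ, s - t = q ^ 2) := by
  obtain ⟨e⟩ := h
  let F : (ZMod 2 × ZMod 4) →+ W.toAffine.Point :=
    (AddSubgroup.subtype _).comp e.symm.toAddMonoidHom
  have hFinj : Function.Injective F := fun a b hab => by
    exact e.symm.injective (Subtype.coe_injective hab)
  have hF0 : ∀ z : ZMod 2 × ZMod 4, z ≠ 0 → F z ≠ 0 := fun z hz h0 => by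
    exact hz (hFinj (h0.trans F.map_zero.symm))
  -- the three 2-torsion points
  obtain ⟨x₁, y₁, h₁, hT1⟩ := eq_some_of_ne_zero (hF0 (1, 0) (by decide))
  obtain ⟨x₂, y₂, h₂, hT2⟩ := eq_some_of_ne_zero (hF0 (0, 2) (by decide))
  obtain ⟨x₃, y₃, h₃, hT3⟩ := eq_some_of_ne_zero (hF0 (1, 2) (by decide))
  have two1 : Point.some _ _ h₁ + Point.some _ _ h₁ = 0 := by
    rw [← hT1, ← F.map_add, show ((1, 0) + (1, 0) : ZMod 2 × ZMod 4) = 0 by decide, F.map_zero]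
  have two2 : Point.some _ _ h₂ + Point.some _ _ h₂ = 0 := by
    rw [← hT2, ← F.map_add, show ((0, 2) + (0, 2) : ZMod 2 × ZMod 4) = 0 by decide, F.map_zero]
  have two3 : Point.some _ _ h₃ + Point.some _ _ h₃ = 0 := by
    rw [← hT3, ← F.map_add, show ((1, 2) + (1, 2) : ZMod 2 × ZMod 4) = 0 by decide, F.map_zero]
  obtain ⟨hy₁, hr₁⟩ := two_torsion h₁ two1
  obtain ⟨hy₂, hr₂⟩ := two_torsion h₂ two2
  obtain ⟨hy₃, hr₃⟩ := two_torsion h₃ two3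
  -- distinct x-coordinates
  have hxne : ∀ {a b : ℚ} {ya yb : ℚ} (ha : W.toAffine.Nonsingular a ya)
      (hb : W.toAffine.Nonsingular b yb), ya = W.toAffine.negY a ya →
      yb = W.toAffine.negY b yb → Point.some _ _ ha ≠ Point.some _ _ hb → a ≠ b := by
    intro a b ya yb ha hb hya hyb hne hab
    subst hab
    apply hne
    have : ya = yb := by
      rw [negY] at hya hyb; linarith
    subst this
    rfl
  have h12 : x₁ ≠ x₂ := hxne h₁ h₂ hy₁ hy₂ (by
    rw [← hT1, ← hT2]; exact fun hc => absurd (hFinj hc) (by decide))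
  have h13 : x₁ ≠ x₃ := hxne h₁ h₃ hy₁ hy₃ (by
    rw [← hT1, ← hT3]; exact fun hc => absurd (hFinj hc) (by decide))
  have h23 : x₂ ≠ x₃ := hxne h₂ h₃ hy₂ hy₃ (by
    rw [← hT2, ← hT3]; exact fun hc => absurd (hFinj hc) (by decide))
  -- the order-4 point
  obtain ⟨x, y, hP, hPeq⟩ := eq_some_of_ne_zero (hF0 (0, 1) (by decide))
  have hPP : Point.some _ _ hP + Point.some _ _ hP = Point.some _ _ h₂ := by
    rw [← hPeq, ← hT2, ← F.map_add]
    norm_num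
  have hyP : y ≠ W.toAffine.negY x y := by
    intro hc
    rw [add_self_of_Y_eq hc] at hPP
    exact some_ne_zero _ hPP.symm
  rw [add_self_of_Y_ne hyP] at hPP
  rw [Point.some.injEq] at hPP
  have hxadd : W.toAffine.addX x x (W.toAffine.slope x x y y) = x₂ := hPP.1
  obtain ⟨q₁, hq₁⟩ := double_sub_root hP.1 hyP hr₁
  obtain ⟨q₂, hq₂⟩ := double_sub_root hP.1 hyP hr₃
  rw [hxadd] at hq₁ hq₂
  exact ⟨x₁, x₂, x₃, hr₁, hr₂, hr₃, h12, h13, h23, ⟨q₁, hq₁⟩, ⟨q₂, hq₂⟩⟩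

lemma cubic_roots {a b c r s t v : ℚ}
    (h1 : r ^ 3 + a * r ^ 2 + b * r + c = 0) (h2 : s ^ 3 + a * s ^ 2 + b * s + c = 0)
    (h3 : t ^ 3 + a * t ^ 2 + b * t + c = 0)
    (hrs : r ≠ s) (hrt : r ≠ t) (hst : s ≠ t)
    (hv : v ^ 3 + a * v ^ 2 + b * v + c = 0) : v = r ∨ v = s ∨ v = t := by
  have e12 : r ^ 2 + r * s + s ^ 2 + a * (r + s) + b = 0 :=
    mul_left_cancel₀ (sub_ne_zero_of_ne hrs) (by linear_combination h1 - h2)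
  have e13 : r ^ 2 + r * t + t ^ 2 + a * (r + t) + b = 0 :=
    mul_left_cancel₀ (sub_ne_zero_of_ne hrt) (by linear_combination h1 - h3)
  have ha : a = -(r + s + t) :=
    mul_left_cancel₀ (sub_ne_zero_of_ne hst) (by linear_combination e12 - e13)
  have hb : b = r * s + r * t + s * t := by linear_combination e12 - (r + s) * ha
  have hc : c = -(r * s * t) := by linear_combination h1 - r ^ 2 * ha - r * hb
  have hsplit : (v - r) * ((v - s) * (v - t)) = 0 := by
    linear_combination hv - v ^ 2 * ha - v * hb - hc
  rcases mul_eq_zero.mp hsplit with h | h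
  · exact Or.inl (sub_eq_zero.mp h)
  · rcases mul_eq_zero.mp h with h | h
    · exact Or.inr (Or.inl (sub_eq_zero.mp h))
    · exact Or.inr (Or.inr (sub_eq_zero.mp h))

lemma psi_quadTwist (E : WeierstrassCurve ℚ) {d : ℚ} (hd : d ≠ 0) {X : ℚ}
    (h : psi (quadTwist E d) X = 0) : psi E (X / d) = 0 := by
  have key : psi E (X / d) = psi (quadTwist E d) X / d ^ 3 := by
    simp only [psi, quadTwist, b₂, b₄, b₆]
    field_simp
    ring
  rw [key, h, zero_div]

lemma int_eq_one_of_sq {e : ℤ} (he : Squarefree e) {q : ℚ} (h : (e : ℚ) = q ^ 2) : e = 1 := by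
  have hden : (q.den : ℚ) ≠ 0 := by exact_mod_cast q.den_ne_zero
  have key : e * (q.den : ℤ) ^ 2 = q.num ^ 2 := by
    have hnd : (q.num : ℚ) = q * (q.den : ℚ) := (div_eq_iff hden).mp (Rat.num_div_den q)
    have h2 : (e : ℚ) * ((q.den : ℚ)) ^ 2 = ((q.num : ℚ)) ^ 2 := by
      rw [hnd, h]; ring
    exact_mod_cast h2
  have hdvd : ((q.den : ℤ)) ^ 2 ∣ q.num ^ 2 := ⟨e, by linear_combination -key⟩
  have hdvdn : q.den ^ 2 ∣ q.num.natAbs ^ 2 := by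
    have := Int.natAbs_dvd_natAbs.mpr hdvd
    simpa [Int.natAbs_pow] using this
  have hden1 : q.den = 1 := by
    clear hdvd key
    have hcop : (q.den ^ 2).Coprime (q.num.natAbs ^ 2) := q.reduced.symm.pow 2 2
    have h1 : q.den ^ 2 = 1 := hcop.eq_one_of_dvd hdvdn
    have h2 := Nat.le_of_dvd Nat.one_pos (h1 ▸ dvd_pow_self q.den two_ne_zero)
    have hp := q.den_pos
    omega
  have he2 : e = q.num ^ 2 := by
    rw [hden1] at key; simpa using key
  have hu : IsUnit q.num := he q.num ⟨1, by linear_combination he2⟩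
  rcases Int.isUnit_iff.mp hu with h' | h' <;> rw [he2, h'] <;> norm_num

lemma mul_sq_eq_one {e : ℤ} (he : Squarefree e) {α γ : ℚ} (hα : α ≠ 0)
    (h : (e : ℚ) * α ^ 2 = γ ^ 2) : e = 1 :=
  int_eq_one_of_sq he (q := γ / α) (by rw [div_pow, eq_div_iff (pow_ne_zero 2 hα)]; exact h)

lemma twist_sq {e : ℤ} (he : Squarefree e) {X Y q g : ℚ} (hne : X ≠ Y)
    (hq : X - Y = q ^ 2) (hg : (e : ℚ) * X - (e : ℚ) * Y = g ^ 2) : e = 1 := by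
  have hq0 : q ≠ 0 := by
    intro h0
    rw [h0] at hq
    apply hne
    nlinarith [hq]
  exact mul_sq_eq_one he (γ := g) hq0 (by linear_combination (-(e : ℚ)) * hq + hg)

end Stmt19

theorem stmt_19 (E : WeierstrassCurve ℚ) (hE : E.Δ ≠ 0)
    (htors : Nonempty (torsQ E ≃+ (ZMod 2) × (ZMod 4)))
    (d : ℤ) (hd : Squarefree d) (hd1 : d ≠ 1)
    (htwist : Nonempty (torsQ (quadTwist E (d : ℚ)) ≃+ (ZMod 2) × (ZMod 4))) :
    d = -1 := by
  have hd0 : d ≠ 0 := hd.ne_zero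
  have hdQ : (d : ℚ) ≠ 0 := Int.cast_ne_zero.mpr hd0
  have hsf : Squarefree (-d) := fun x hx => hd x (dvd_neg.mp hx)
  obtain ⟨r, s, t, hr, hs, ht, hrs, hrt, hst, ⟨q₁, hq₁⟩, ⟨q₂, hq₂⟩⟩ := Stmt19.extract E htors
  obtain ⟨r', s', t', hr', hs', ht', hrs', hrt', hst', ⟨g₁, hg₁⟩, ⟨g₂, hg₂⟩⟩ :=
    Stmt19.extract (quadTwist E (d : ℚ)) htwist
  have mem : ∀ v : ℚ, Stmt19.psi E v = 0 → v = r ∨ v = s ∨ v = t := by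
    intro v hv
    simp only [Stmt19.psi] at hr hs ht hv
    exact Stmt19.cubic_roots hr hs ht hrs hrt hst hv
  have hdd : ∀ {A B : ℚ}, A / (d : ℚ) = B → A = (d : ℚ) * B := fun h => by
    rw [div_eq_iff hdQ] at h; rw [h]; ring
  have hms := mem _ (Stmt19.psi_quadTwist E hdQ hs')
  have hmr := mem _ (Stmt19.psi_quadTwist E hdQ hr')
  have hmt := mem _ (Stmt19.psi_quadTwist E hdQ ht')
  rcases hms with h | h | h
  · -- s' = d * r
    have hs'd := hdd h
    rcases hmr with h2 | h2 | h2
    · exact absurd ((hdd h2).trans hs'd.symm) hrs'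
    · have hr'd := hdd h2
      have hneg : (-d : ℤ) = 1 := Stmt19.twist_sq hsf (g := g₁) (Ne.symm hrs) hq₁
        (by push_cast; linear_combination hg₁ - hs'd + hr'd)
      omega
    · have hr'd := hdd h2
      rcases hmt with h3 | h3 | h3
      · exact absurd ((hdd h3).trans hs'd.symm).symm hst'
      · have ht'd := hdd h3
        have hneg : (-d : ℤ) = 1 := Stmt19.twist_sq hsf (g := g₂) (Ne.symm hrs) hq₁
          (by push_cast; linear_combination hg₂ - hs'd + ht'd)
        omega
      · exact absurd (hr'd.trans (hdd h3).symm) hrt'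
  · -- s' = d * s : both twist squares give d = square, contradiction
    have hs'd := hdd h
    rcases hmr with h2 | h2 | h2
    · have hr'd := hdd h2
      exact absurd (Stmt19.twist_sq hd (g := g₁) (Ne.symm hrs) hq₁
         (by linear_combination hg₁ - hs'd + hr'd)) hd1
    · exact absurd ((hdd h2).trans hs'd.symm) hrs'
    · have hr'd := hdd h2
      exact absurd (Stmt19.twist_sq hd (g := g₁) hst hq₂
         (by linear_combination hg₁ - hs'd + hr'd)) hd1
  · -- s' = d * t
    have hs'd := hdd h
    rcases hmr with h2 | h2 | h2
    · have hr'd := hdd h2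
      rcases hmt with h3 | h3 | h3
      · exact absurd (hr'd.trans (hdd h3).symm) hrt'
      · have ht'd := hdd h3
        have hneg : (-d : ℤ) = 1 := Stmt19.twist_sq hsf (g := g₂) hst hq₂
          (by push_cast; linear_combination hg₂ - hs'd + ht'd)
        omega
      · exact absurd ((hdd h3).trans hs'd.symm).symm hst'
    · have hr'd := hdd h2
      have hneg : (-d : ℤ) = 1 := Stmt19.twist_sq hsf (g := g₁) hst hq₂
        (by push_cast; linear_combination hg₁ - hs'd + hr'd)
      omega
    · exact absurd ((hdd h2).trans hs'd.symm) hrs'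
end
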